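/- For every θ ∈ ℝ and all subsets A, B ⊆ {1,…,n}, one has 𝓡_θ* Q_A 𝓡_θ = ∏_{j∈A} (cos θ · Q_j + sin θ · P_j) and τ_n(Q_B · 𝓡_θ* Q_A 𝓡_θ) = cos^{|A|}θ · τ_n(Q_B Q_A); in other words, the orthogonal projection (with respect to the trace inner product ⟨S,T⟩ = τ_n(T*S)) of 𝓡_θ* Q_A 𝓡_θ onto the linear span of {Q_{A'} : A' ⊆ {1,…,n}} equals cos^{|A|}θ · Q_A. -/

import Mathlib

open Matrix Finset Real
open scoped ENNReal ComplexOrder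

namespace PauliCube

/-- Index set of `M_{2^n}(ℂ) ≅ M_2(ℂ) ⊗ ⋯ ⊗ M_2(ℂ)` (`n` factors). -/
abbrev Idx (n : ℕ) := Fin n → Fin 2

/-- The algebra `M_{2^n}(ℂ)`. -/
abbrev Mat (n : ℕ) := Matrix (Idx n) (Idx n) ℂ

/-- Pauli matrix `U = [[1,0],[0,−1]]`. -/
def Umat : Matrix (Fin 2) (Fin 2) ℂ := !![1, 0; 0, -1]

/-- Pauli matrix `Q = [[0,1],[1,0]]`. -/
def Qmat : Matrix (Fin 2) (Fin 2) ℂ := !![0, 1; 1, 0]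

/-- Pauli matrix `P = [[0,i],[−i,0]]`. -/
def Pmat : Matrix (Fin 2) (Fin 2) ℂ := !![0, Complex.I; -Complex.I, 0]

/-- Kronecker (tensor) product of `n` matrices in `M_2(ℂ)`, realized in `M_{2^n}(ℂ)`:
the `(x,y)` entry of `M_1 ⊗ ⋯ ⊗ M_n` is `∏_j (M_j)_{x_j,y_j}`. -/
def kron {n : ℕ} (M : Fin n → Matrix (Fin 2) (Fin 2) ℂ) : Mat n :=
  fun x y => ∏ j : Fin n, M j (x j) (y j)

/-- `Q_j = Id ⊗ ⋯ ⊗ Q ⊗ ⋯ ⊗ Id` (`Q` in position `j`). -/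
def Qj {n : ℕ} (j : Fin n) : Mat n := kron (fun k => if k = j then Qmat else 1)

/-- `P_j = Id ⊗ ⋯ ⊗ P ⊗ ⋯ ⊗ Id` (`P` in position `j`). -/
def Pj {n : ℕ} (j : Fin n) : Mat n := kron (fun k => if k = j then Pmat else 1)

/-- `Q_A = Q_{i_1} ⋯ Q_{i_k}` for `A = {i_1 < ⋯ < i_k}`, with `Q_∅ = Id`. -/
noncomputable def QA {n : ℕ} (A : Finset (Fin n)) : Mat n :=
  ((A.sort (· ≤ ·)).map Qj).prod

/-- `P_B = P_{j_1} ⋯ P_{j_m}` for `B = {j_1 < ⋯ < j_m}`, with `P_∅ = Id`. -/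
noncomputable def PB {n : ℕ} (B : Finset (Fin n)) : Mat n :=
  ((B.sort (· ≤ ·)).map Pj).prod

/-- Normalized trace on `M_{2^n}(ℂ)`. -/
noncomputable def τ {n : ℕ} (S : Mat n) : ℂ := Matrix.trace S / 2 ^ n

/-- Singular values of a matrix: the eigenvalues of `|S| = (S^*S)^{1/2}`, i.e. the
square roots of the eigenvalues of the Hermitian matrix `S^*S`. -/
noncomputable def sVals {n : ℕ} (S : Mat n) : Idx n → ℝ :=
  fun i => Real.sqrt ((Matrix.posSemidef_conjTranspose_mul_self S).1.eigenvalues i)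

/-- Schatten norm `C_p`, `1 ≤ p < ∞`, w.r.t. the normalized trace:
`‖S‖_{C_p} = (τ(|S|^p))^{1/p}`. -/
noncomputable def schatten {n : ℕ} (p : ℝ) (S : Mat n) : ℝ :=
  ((∑ i : Idx n, sVals S i ^ p) / 2 ^ n) ^ (1 / p)

/-- Schatten norm with exponent `p ∈ [1,∞]`; `p = ∞` gives the operator norm
(the largest singular value). -/
noncomputable def schattenE {n : ℕ} (p : ℝ≥0∞) (S : Mat n) : ℝ :=
  if p = ⊤ then ⨆ i : Idx n, sVals S i
  else ((∑ i : Idx n, sVals S i ^ p.toReal) / 2 ^ n) ^ (1 / p.toReal)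

end PauliCube

namespace PauliCube

/-- `R_θ = [[1,0],[0,e^{iθ}]] ∈ M_2(ℂ)`. -/
noncomputable def Rθ (θ : ℝ) : Matrix (Fin 2) (Fin 2) ℂ :=
  !![1, 0; 0, Complex.exp (θ * Complex.I)]

/-- `𝓡_θ = R_θ ⊗ ⋯ ⊗ R_θ` (`n` factors). -/
noncomputable def RR (n : ℕ) (θ : ℝ) : Mat n := kron (fun _ => Rθ θ)

end PauliCube

/-!
Every operator involved is a Kronecker product of `2 × 2` matrices, and products, adjoints
and traces of Kronecker products are computed site by site. On a single site
`R_θ* R_θ = 1` and `R_θ* Q R_θ = cos θ · Q + sin θ · P`, which gives the first identity.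
Since `tr P = tr (Q P) = 0`, each site of `A` then contributes exactly a factor `cos θ`
to `τ_n (Q_B · 𝓡_θ* Q_A 𝓡_θ)`.
-/

namespace PauliCube

lemma kron_mul {n : ℕ} (M N : Fin n → Matrix (Fin 2) (Fin 2) ℂ) :
    kron M * kron N = kron (fun j => M j * N j) := by
  ext x y
  simp only [kron, mul_apply, ← Finset.prod_mul_distrib]
  exact (Fintype.prod_sum fun j i => M j (x j) i * N j i (y j)).symm

lemma kron_one {n : ℕ} : (kron fun _ : Fin n => (1 : Matrix (Fin 2) (Fin 2) ℂ)) = 1 := by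
  ext x y
  simp only [kron, one_apply]
  by_cases h : x = y
  · simp [h]
  · obtain ⟨j, hj⟩ := Function.ne_iff.mp h
    rw [if_neg h]
    exact Finset.prod_eq_zero (Finset.mem_univ j) (if_neg hj)

lemma kron_conjTranspose {n : ℕ} (M : Fin n → Matrix (Fin 2) (Fin 2) ℂ) :
    (kron M)ᴴ = kron (fun j => (M j)ᴴ) := by
  ext x y
  simp only [kron, conjTranspose_apply, star_prod]

lemma trace_kron {n : ℕ} (M : Fin n → Matrix (Fin 2) (Fin 2) ℂ) :
    trace (kron M) = ∏ j, trace (M j) := by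
  simp only [trace, Matrix.diag, kron]
  exact (Fintype.prod_sum fun j i => M j i i).symm

lemma kron_ite_apply {n : ℕ} (j : Fin n) (M : Matrix (Fin 2) (Fin 2) ℂ) (x y : Idx n) :
    kron (fun k => if k = j then M else 1) x y =
      M (x j) (y j) * ∏ k ∈ Finset.univ.erase j, (1 : Matrix (Fin 2) (Fin 2) ℂ) (x k) (y k) := by
  rw [kron, ← Finset.mul_prod_erase _ _ (Finset.mem_univ j), if_pos rfl]
  exact congrArg _ (Finset.prod_congr rfl fun k hk => by
    rw [if_neg (Finset.ne_of_mem_erase hk)])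

lemma kron_ite_add_smul {n : ℕ} (j : Fin n) (c s : ℂ) (M N : Matrix (Fin 2) (Fin 2) ℂ) :
    kron (fun k => if k = j then c • M + s • N else 1) =
      c • kron (fun k => if k = j then M else 1) + s • kron (fun k => if k = j then N else 1) := by
  ext x y
  simp only [Matrix.add_apply, Matrix.smul_apply, kron_ite_apply, smul_eq_mul]
  ring

lemma list_prod_map_kron_ite {n : ℕ} (F : Fin n → Matrix (Fin 2) (Fin 2) ℂ) :
    ∀ l : List (Fin n), l.Nodup →
      (l.map fun j => kron (fun k => if k = j then F j else 1)).prod =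
        kron (fun k => if k ∈ l then F k else 1)
  | [], _ => by simp [kron_one]
  | j :: t, h => by
    obtain ⟨hj, ht⟩ := List.nodup_cons.mp h
    rw [List.map_cons, List.prod_cons, list_prod_map_kron_ite F t ht, kron_mul]
    congr 1
    funext k
    by_cases hk : k = j
    · subst hk
      simp [hj]
    · simp [hk]

lemma prod_sort_map_kron_ite {n : ℕ} (F : Fin n → Matrix (Fin 2) (Fin 2) ℂ)
    (A : Finset (Fin n)) :
    ((A.sort (· ≤ ·)).map fun j => kron (fun k => if k = j then F j else 1)).prod =
      kron (fun k => if k ∈ A then F k else 1) := by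
  simpa only [Finset.mem_sort] using list_prod_map_kron_ite F _ (A.sort_nodup (· ≤ ·))

lemma QA_eq_kron {n : ℕ} (A : Finset (Fin n)) :
    QA A = kron (fun k => if k ∈ A then Qmat else 1) :=
  prod_sort_map_kron_ite (fun _ => Qmat) A

lemma prod_sort_map_smul_Qj_add_smul_Pj {n : ℕ} (c s : ℂ) (A : Finset (Fin n)) :
    ((A.sort (· ≤ ·)).map fun j => c • Qj j + s • Pj j).prod =
      kron (fun k => if k ∈ A then c • Qmat + s • Pmat else 1) := by
  simp only [Qj, Pj, ← kron_ite_add_smul]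
  exact prod_sort_map_kron_ite (fun _ => c • Qmat + s • Pmat) A

lemma Rθ_conjTranspose_mul_self (θ : ℝ) : (Rθ θ)ᴴ * Rθ θ = 1 := by
  ext i j
  fin_cases i <;> fin_cases j <;>
    simp [Rθ, mul_apply, one_apply, ← Complex.exp_conj, ← Complex.exp_add, Complex.conj_ofReal]

lemma Rθ_conjTranspose_mul_Qmat_mul (θ : ℝ) :
    (Rθ θ)ᴴ * Qmat * Rθ θ = (Real.cos θ : ℂ) • Qmat + (Real.sin θ : ℂ) • Pmat := by
  ext i j
  fin_cases i <;> fin_cases j <;>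
    simp [Rθ, Qmat, Pmat, mul_apply, Complex.conj_ofReal, Complex.exp_mul_I,
      ← Complex.ofReal_cos, ← Complex.ofReal_sin]

lemma RR_conjTranspose_mul_QA_mul (n : ℕ) (θ : ℝ) (A : Finset (Fin n)) :
    (RR n θ)ᴴ * QA A * RR n θ =
      kron (fun k => if k ∈ A then (Real.cos θ : ℂ) • Qmat + (Real.sin θ : ℂ) • Pmat else 1) := by
  rw [QA_eq_kron, RR, kron_conjTranspose, kron_mul, kron_mul]
  congr 1
  funext k
  split_ifs
  · exact Rθ_conjTranspose_mul_Qmat_mul θ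
  · rw [mul_one, Rθ_conjTranspose_mul_self]

lemma trace_ite_Qmat_mul_Pmat (b : Prop) [Decidable b] :
    trace ((if b then Qmat else 1) * Pmat) = 0 := by
  split_ifs <;> simp [Qmat, Pmat, trace_fin_two]

lemma trace_mul_smul_Qmat_add_smul_Pmat (X : Matrix (Fin 2) (Fin 2) ℂ)
    (hX : trace (X * Pmat) = 0) (c s : ℂ) :
    trace (X * (c • Qmat + s • Pmat)) = c * trace (X * Qmat) := by
  rw [mul_add, mul_smul_comm, mul_smul_comm, trace_add, trace_smul, trace_smul, hX,
    smul_zero, add_zero, smul_eq_mul]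

end PauliCube

open PauliCube

theorem conj_RR_QA_general (n : ℕ) (θ : ℝ) (A : Finset (Fin n)) :
    (RR n θ)ᴴ * QA A * RR n θ =
        ((A.sort (· ≤ ·)).map
          (fun j => (Real.cos θ : ℂ) • Qj j + (Real.sin θ : ℂ) • Pj j)).prod ∧
      ∀ B : Finset (Fin n),
        τ (QA B * ((RR n θ)ᴴ * QA A * RR n θ)) =
          (Real.cos θ : ℂ) ^ A.card * τ (QA B * QA A) := by
  rw [RR_conjTranspose_mul_QA_mul, prod_sort_map_smul_Qj_add_smul_Pj]
  refine ⟨rfl, fun B => ?_⟩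
  have site : ∀ k : Fin n,
      trace ((if k ∈ B then Qmat else 1) *
          (if k ∈ A then (Real.cos θ : ℂ) • Qmat + (Real.sin θ : ℂ) • Pmat else 1)) =
        (if k ∈ A then (Real.cos θ : ℂ) else 1) *
          trace ((if k ∈ B then Qmat else 1) * (if k ∈ A then Qmat else 1)) := by
    intro k
    by_cases hA : k ∈ A
    · rw [if_pos hA, if_pos hA, if_pos hA]
      exact trace_mul_smul_Qmat_add_smul_Pmat _ (trace_ite_Qmat_mul_Pmat _) _ _
    · rw [if_neg hA, if_neg hA, if_neg hA, one_mul]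
  rw [τ, τ, QA_eq_kron, QA_eq_kron, kron_mul, kron_mul, trace_kron, trace_kron,
    Finset.prod_congr rfl fun k _ => site k, Finset.prod_mul_distrib, Fintype.prod_ite_mem,
    Finset.prod_const, mul_div_assoc]

/-- For every `θ ∈ ℝ` and all `A, B ⊆ {1,…,n}`:
`𝓡_θ* Q_A 𝓡_θ = ∏_{j∈A} (cos θ · Q_j + sin θ · P_j)` (product in increasing order
of indices), and `τ_n(Q_B · 𝓡_θ* Q_A 𝓡_θ) = cos^{|A|}θ · τ_n(Q_B Q_A)`; that is,
the trace-orthogonal projection of `𝓡_θ* Q_A 𝓡_θ` onto `span{Q_{A'}}` is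
`cos^{|A|}θ · Q_A`. -/
theorem conj_RR_QA (n : ℕ) (hn : 1 ≤ n) (θ : ℝ) (A : Finset (Fin n)) :
    (RR n θ)ᴴ * QA A * RR n θ =
        ((A.sort (· ≤ ·)).map
          (fun j => (Real.cos θ : ℂ) • Qj j + (Real.sin θ : ℂ) • Pj j)).prod ∧
      ∀ B : Finset (Fin n),
        τ (QA B * ((RR n θ)ᴴ * QA A * RR n θ)) =
          (Real.cos θ : ℂ) ^ A.card * τ (QA B * QA A) :=
  conj_RR_QA_general n θ A
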